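/- arXiv:2505.00358 — 2 statements merged into one kernel-verified Lean document; each statement's English description precedes it below -/
import Mathlib

section
/- Let ℒ: ℝ^n → ℝ be L-smooth and let g_1, …, g_m ∈ ℝ^n be 'skill gradients' at a point θ_0, with evaluation gradient g(p) := ∑_i p_i g_i for p ∈ Δ^{m-1}. Suppose ∇ℒ(θ_0) = g(p) for some fixed p ∈ Δ^{m-1}. Let i* = argmax_i g_iᵀ g(p), and let p'' ∈ Δ^{m-1} be arbitrary with g(p'') := ∑_i p''_i g_i. If 0 < η ≤ (1/L) · (g_{i*}ᵀ g(p) − g(p'')ᵀ g(p)) / (max_i ‖g_i‖² + ‖g(p'')‖²) (and the numerator is nonnegative), then ℒ(θ_0 − η g_{i*}) ≤ ℒ(θ_0 − η g(p'')). That is, descending along the single best-aligned skill gradient decreases the loss at least as much as descending along any fixed mixture of skill gradients. -/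
open scoped RealInnerProductSpace

lemma line_deriv {E : Type*} [NormedAddCommGroup E] [InnerProductSpace ℝ E] [CompleteSpace E]
    (f : E → ℝ) (f' : E → E) (hdiff : ∀ x, HasGradientAt f (f' x) x)
    (x d : E) (t : ℝ) :
    HasDerivAt (fun s : ℝ => f (x + s • d)) ⟪f' (x + t • d), d⟫ t := by
  have hc : HasDerivAt (fun s : ℝ => x + s • d) d t := by
    simpa using ((hasDerivAt_id t).smul_const d).const_add x
  have := ((hdiff (x + t • d)).hasFDerivAt.comp_hasDerivAt t hc)
  simpa [InnerProductSpace.toDual_apply_apply, Function.comp_def] using this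

lemma descent_upper {E : Type*} [NormedAddCommGroup E] [InnerProductSpace ℝ E] [CompleteSpace E]
    (f : E → ℝ) (f' : E → E) (L : ℝ) (hL : 0 < L)
    (hdiff : ∀ x, HasGradientAt f (f' x) x)
    (hlip : ∀ x y, ‖f' x - f' y‖ ≤ L * ‖x - y‖)
    (x d : E) :
    |f (x + d) - f x - ⟪f' x, d⟫| ≤ L / 2 * ‖d‖ ^ 2 := by
  have key : ∀ ε : ℝ, ε = 1 ∨ ε = -1 →
      ε * (f (x + d) - f x - ⟪f' x, d⟫) ≤ L / 2 * ‖d‖ ^ 2 := by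
    intro ε hε
    set F : ℝ → ℝ := fun t => L / 2 * ‖d‖ ^ 2 * t ^ 2 -
      ε * (f (x + t • d) - f x - t * ⟪f' x, d⟫) with hF
    have hF' : ∀ t : ℝ, HasDerivAt F
        (L * ‖d‖ ^ 2 * t - ε * (⟪f' (x + t • d), d⟫ - ⟪f' x, d⟫)) t := by
      intro t
      have h1 := line_deriv f f' hdiff x d t
      have h2 : HasDerivAt (fun t : ℝ => f (x + t • d) - f x - t * ⟪f' x, d⟫)
          (⟪f' (x + t • d), d⟫ - ⟪f' x, d⟫) t := by
        simpa [Pi.sub_def] using (h1.sub_const (f x)).sub ((hasDerivAt_id t).mul_const ⟪f' x, d⟫)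
      have h3 : HasDerivAt (fun t : ℝ => L / 2 * ‖d‖ ^ 2 * t ^ 2)
          (L * ‖d‖ ^ 2 * t) t := by
        have := (hasDerivAt_pow 2 t).const_mul (L / 2 * ‖d‖ ^ 2)
        refine this.congr_deriv ?_
        norm_num; ring
      simpa [hF, Pi.sub_def] using h3.sub (h2.const_mul ε)
    have hmono : MonotoneOn F (Set.Icc (0 : ℝ) 1) := by
      apply monotoneOn_of_deriv_nonneg (convex_Icc 0 1)
      · exact (continuous_iff_continuousAt.mpr fun t => (hF' t).continuousAt).continuousOn
      · exact fun t _ => ((hF' t).differentiableAt).differentiableWithinAt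
      · intro t ht
        rw [(hF' t).deriv]
        rw [interior_Icc] at ht
        have hlb : |⟪f' (x + t • d) - f' x, d⟫| ≤ L * t * ‖d‖ ^ 2 := by
          calc |⟪f' (x + t • d) - f' x, d⟫| ≤ ‖f' (x + t • d) - f' x‖ * ‖d‖ :=
                abs_real_inner_le_norm _ _
            _ ≤ (L * ‖(x + t • d) - x‖) * ‖d‖ := by
                gcongr; exact hlip _ _
            _ = L * t * ‖d‖ ^ 2 := by
                rw [add_sub_cancel_left, norm_smul, Real.norm_eq_abs,
                  abs_of_pos ht.1]
                ring
        have h4 : ε * (⟪f' (x + t • d), d⟫ - ⟪f' x, d⟫) ≤ L * t * ‖d‖ ^ 2 := by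
          have : ⟪f' (x + t • d), d⟫ - ⟪f' x, d⟫ = ⟪f' (x + t • d) - f' x, d⟫ := by
            rw [inner_sub_left]
          rw [this]
          rcases hε with h | h <;> rw [h]
          · simpa using (abs_le.mp hlb).2
          · simpa using neg_le_of_neg_le (abs_le.mp hlb).1
        linarith
    have h01 := hmono (Set.left_mem_Icc.mpr zero_le_one)
      (Set.right_mem_Icc.mpr zero_le_one) zero_le_one
    simp only [hF] at h01
    norm_num at h01
    nlinarith [h01]
  have h1 := key 1 (Or.inl rfl)
  have h2 := key (-1) (Or.inr rfl)
  rw [abs_le]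
  constructor <;> nlinarith
set_option maxHeartbeats 1600000 in
/-- For an `L`-smooth loss whose gradient at `θ₀` equals the mixture `g(p) = ∑ᵢ pᵢgᵢ`
of skill gradients, descending along the single best-aligned skill gradient `g_{i*}`
decreases the loss at least as much as descending along any fixed mixture `g(p'')`,
provided the step size is small enough. -/
theorem stmt5 {n m : ℕ} (hm : 0 < m)
    (f : EuclideanSpace ℝ (Fin n) → ℝ)
    (f' : EuclideanSpace ℝ (Fin n) → EuclideanSpace ℝ (Fin n))
    (L : ℝ) (hL : 0 < L)
    (hdiff : ∀ x, HasGradientAt f (f' x) x)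
    (hlip : ∀ x y, ‖f' x - f' y‖ ≤ L * ‖x - y‖)
    (θ₀ : EuclideanSpace ℝ (Fin n))
    (g : Fin m → EuclideanSpace ℝ (Fin n))
    (p p'' : Fin m → ℝ)
    (hp : p ∈ stdSimplex ℝ (Fin m)) (hp'' : p'' ∈ stdSimplex ℝ (Fin m))
    (hgrad : f' θ₀ = ∑ i, p i • g i)
    (istar : Fin m)
    (histar : ∀ i, (inner ℝ (g i) (∑ j, p j • g j) : ℝ) ≤
      inner ℝ (g istar) (∑ j, p j • g j))
    (hnum : 0 ≤ (inner ℝ (g istar) (∑ j, p j • g j) : ℝ) -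
      inner ℝ (∑ i, p'' i • g i) (∑ j, p j • g j))
    (η : ℝ) (hη : 0 < η)
    (hηle : η ≤ (1 / L) *
      (((inner ℝ (g istar) (∑ j, p j • g j) : ℝ) -
          inner ℝ (∑ i, p'' i • g i) (∑ j, p j • g j)) /
        ((Finset.univ.sup' ⟨⟨0, hm⟩, Finset.mem_univ _⟩ fun i => ‖g i‖ ^ 2) +
          ‖∑ i, p'' i • g i‖ ^ 2))) :
    f (θ₀ - η • g istar) ≤ f (θ₀ - η • ∑ i, p'' i • g i) := by
  set gp : EuclideanSpace ℝ (Fin n) := ∑ j, p j • g j with hgp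
  set u : EuclideanSpace ℝ (Fin n) := ∑ i, p'' i • g i with hu
  set v : EuclideanSpace ℝ (Fin n) := g istar with hv
  set A : ℝ := ⟪v, gp⟫ with hA
  set B : ℝ := ⟪u, gp⟫ with hB
  set M : ℝ := Finset.univ.sup' ⟨⟨0, hm⟩, Finset.mem_univ _⟩ fun i => ‖g i‖ ^ 2 with hM
  set D : ℝ := M + ‖u‖ ^ 2 with hD
  have hvM : ‖v‖ ^ 2 ≤ M := by
    rw [hv]; exact Finset.le_sup' (fun i => ‖g i‖ ^ 2) (Finset.mem_univ istar)
  have hM0 : 0 ≤ M := le_trans (sq_nonneg _) hvM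
  have hD0 : 0 ≤ D := by positivity
  rcases eq_or_lt_of_le hD0 with hDz | hDpos
  · rw [← hDz] at hηle
    simp at hηle
    linarith
  have key : η * (L * D) ≤ A - B := by
    have : (1 / L) * ((A - B) / D) = (A - B) / (L * D) := by
      field_simp
    rw [this] at hηle
    exact (le_div_iff₀ (by positivity)).mp hηle
  have h1 := descent_upper f f' L hL hdiff hlip θ₀ (-(η • v))
  have h2 := descent_upper f f' L hL hdiff hlip θ₀ (-(η • u))
  rw [abs_le] at h1 h2
  have e1 : θ₀ + -(η • v) = θ₀ - η • v := by abel
  have e2 : θ₀ + -(η • u) = θ₀ - η • u := by abel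
  rw [e1] at h1; rw [e2] at h2
  have i1 : ⟪f' θ₀, -(η • v)⟫ = -(η * A) := by
    rw [hgrad, inner_neg_right, real_inner_smul_right, hA, real_inner_comm]
  have i2 : ⟪f' θ₀, -(η • u)⟫ = -(η * B) := by
    rw [hgrad, inner_neg_right, real_inner_smul_right, hB, real_inner_comm]
  have n1 : ‖-(η • v)‖ ^ 2 = η ^ 2 * ‖v‖ ^ 2 := by
    rw [norm_neg, norm_smul, mul_pow, Real.norm_eq_abs, sq_abs]
  have n2 : ‖-(η • u)‖ ^ 2 = η ^ 2 * ‖u‖ ^ 2 := by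
    rw [norm_neg, norm_smul, mul_pow, Real.norm_eq_abs, sq_abs]
  rw [i1, n1] at h1
  rw [i2, n2] at h2
  have hu0 : 0 ≤ ‖u‖ ^ 2 := sq_nonneg _
  nlinarith [h1.1, h1.2, h2.1, h2.2, mul_le_mul_of_nonneg_left key (le_of_lt hη),
    mul_le_mul_of_nonneg_left hvM (mul_nonneg hL.le (sq_nonneg η))]
end

section
/- Let A and B be finite multisets of real numbers with |A| = |B| = n ≥ 1. Let μ_A, μ_B denote their means, and suppose μ_A ≥ μ_B. Let r_A = max_{a ∈ A} |a − μ_A| and r_B = max_{b ∈ B} |b − μ_B|. Define the regret R = max { μ(Ã) − μ_A : Ã ⊆ A ∪ B (as multisets), |Ã| = n } , where μ(Ã) is the mean of Ã. Then R ≤ max{ 0, (1/2)( r_A + r_B − (μ_A − μ_B) ) }. -/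
/-- Regret bound for reassigning points between two equal-size clusters of reals:
the mean of any size-`n` sub-multiset of the combined pool `A + B` exceeds the mean of
`A` by at most `max{0, (r_A + r_B − (μ_A − μ_B))/2}`. -/
theorem stmt8 (n : ℕ) (hn : 1 ≤ n) (A B : Multiset ℝ)
    (hA : Multiset.card A = n) (hB : Multiset.card B = n)
    (μA μB rA rB : ℝ)
    (hμA : μA = A.sum / n) (hμB : μB = B.sum / n) (hμ : μB ≤ μA)
    (hrA : IsGreatest {x : ℝ | ∃ a ∈ A, x = |a - μA|} rA)
    (hrB : IsGreatest {x : ℝ | ∃ b ∈ B, x = |b - μB|} rB) :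
    ∀ C ≤ A + B, Multiset.card C = n →
      C.sum / n - μA ≤ max 0 ((rA + rB - (μA - μB)) / 2) := by
  intro C hC hCn
  have hn0 : (0:ℝ) < (n:ℝ) := by exact_mod_cast Nat.pos_of_ne_zero (by omega)
  -- bounds on elements of A and B
  have hAbd : ∀ a ∈ A, μA - rA ≤ a ∧ a ≤ μA + rA := by
    intro a ha
    have := hrA.2 ⟨a, ha, rfl⟩
    have := abs_le.mp (le_of_eq rfl |>.trans this)
    constructor <;> linarith [this.1, this.2]
  have hBbd : ∀ b ∈ B, μB - rB ≤ b ∧ b ≤ μB + rB := by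
    intro b hb
    have := hrB.2 ⟨b, hb, rfl⟩
    have := abs_le.mp (le_of_eq rfl |>.trans this)
    constructor <;> linarith [this.1, this.2]
  have hrA0 : 0 ≤ rA := by
    obtain ⟨a, _, ha⟩ := hrA.1; rw [ha]; exact abs_nonneg _
  have hrB0 : 0 ≤ rB := by
    obtain ⟨b, _, hb⟩ := hrB.1; rw [hb]; exact abs_nonneg _
  -- decompose C
  set A' := C ∩ A with hA'def
  set B' := C - A with hB'def
  have hA'le : A' ≤ A := Multiset.inter_le_right
  have hB'le : B' ≤ B := by
    rw [hB'def, Multiset.sub_le_iff_le_add]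
    rwa [add_comm] at hC
  have hsplit : C = A' + B' := by
    rw [hA'def, hB'def, add_comm]
    exact (Multiset.sub_add_inter C A).symm
  set j := Multiset.card A' with hj
  set k := Multiset.card B' with hk
  have hjk : j + k = n := by
    rw [← hCn, hsplit, Multiset.card_add]
  have hjn : j ≤ n := by omega
  have hkn : k ≤ n := by omega
  set D := A - A' with hDdef
  set E := B - B' with hEdef
  have hDle : D ≤ A := tsub_le_self
  have hEle : E ≤ B := tsub_le_self
  have hcardD : Multiset.card D = k := by
    rw [hDdef, Multiset.card_sub hA'le, hA, ← hj]; omega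
  have hcardE : Multiset.card E = j := by
    rw [hEdef, Multiset.card_sub hB'le, hB, ← hk]; omega
  have hsumA : A'.sum + D.sum = (n:ℝ) * μA := by
    have h1 : D + A' = A := tsub_add_cancel_of_le hA'le
    have h2 : A.sum = (n:ℝ) * μA := by
      rw [hμA]; field_simp
    rw [← h2, ← h1, Multiset.sum_add]; ring
  have hsumB : B'.sum + E.sum = (n:ℝ) * μB := by
    have h1 : E + B' = B := tsub_add_cancel_of_le hB'le
    have h2 : B.sum = (n:ℝ) * μB := by
      rw [hμB]; field_simp
    rw [← h2, ← h1, Multiset.sum_add]; ring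
  -- sum bounds
  have hB'up : B'.sum ≤ (k:ℝ) * (μB + rB) := by
    have := Multiset.sum_le_card_nsmul B' (μB + rB)
      (fun x hx => (hBbd x (Multiset.mem_of_le hB'le hx)).2)
    rwa [← hk, nsmul_eq_mul] at this
  have hA'up : A'.sum ≤ (j:ℝ) * (μA + rA) := by
    have := Multiset.sum_le_card_nsmul A' (μA + rA)
      (fun x hx => (hAbd x (Multiset.mem_of_le hA'le hx)).2)
    rwa [← hj, nsmul_eq_mul] at this
  have hDlow : (k:ℝ) * (μA - rA) ≤ D.sum := by
    have := Multiset.card_nsmul_le_sum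
      (fun x hx => (hAbd x (Multiset.mem_of_le hDle hx)).1)
    rwa [hcardD, nsmul_eq_mul] at this
  have hElow : (j:ℝ) * (μB - rB) ≤ E.sum := by
    have := Multiset.card_nsmul_le_sum
      (fun x hx => (hBbd x (Multiset.mem_of_le hEle hx)).1)
    rwa [hcardE, nsmul_eq_mul] at this
  have hCsum : C.sum = A'.sum + B'.sum := by rw [hsplit, Multiset.sum_add]
  have hjkR : (j:ℝ) + (k:ℝ) = (n:ℝ) := by exact_mod_cast congrArg (Nat.cast : ℕ → ℝ) hjk
  have hk0 : (0:ℝ) ≤ (k:ℝ) := Nat.cast_nonneg _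
  have hj0 : (0:ℝ) ≤ (j:ℝ) := Nat.cast_nonneg _
  have hb1 : C.sum - (n:ℝ)*μA ≤ (k:ℝ)*rA + (k:ℝ)*rB - (k:ℝ)*μA + (k:ℝ)*μB := by
    have e1 : (k:ℝ) * (μB + rB) = (k:ℝ)*μB + (k:ℝ)*rB := by ring
    have e2 : (k:ℝ) * (μA - rA) = (k:ℝ)*μA - (k:ℝ)*rA := by ring
    rw [e1] at hB'up; rw [e2] at hDlow
    linarith [hCsum, hsumA, hB'up, hDlow]
  have hb2 : C.sum - (n:ℝ)*μA ≤ (j:ℝ)*μA + (j:ℝ)*rA + (n:ℝ)*μB - (j:ℝ)*μB + (j:ℝ)*rB - (n:ℝ)*μA := by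
    have e1 : (j:ℝ) * (μA + rA) = (j:ℝ)*μA + (j:ℝ)*rA := by ring
    have e2 : (j:ℝ) * (μB - rB) = (j:ℝ)*μB - (j:ℝ)*rB := by ring
    rw [e1] at hA'up; rw [e2] at hElow
    linarith [hCsum, hsumB, hA'up, hElow]
  have hjR : (j:ℝ) = (n:ℝ) - (k:ℝ) := by linarith
  have ej1 : (j:ℝ)*μA = (n:ℝ)*μA - (k:ℝ)*μA := by rw [hjR]; ring
  have ej2 : (j:ℝ)*μB = (n:ℝ)*μB - (k:ℝ)*μB := by rw [hjR]; ring
  have ej3 : (j:ℝ)*rA = (n:ℝ)*rA - (k:ℝ)*rA := by rw [hjR]; ring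
  have ej4 : (j:ℝ)*rB = (n:ℝ)*rB - (k:ℝ)*rB := by rw [hjR]; ring
  rw [sub_le_iff_le_add, div_le_iff₀ hn0]
  rcases le_total ((rA + rB - (μA - μB)) / 2) 0 with h | h
  · rw [max_eq_left h]
    rcases le_total (2 * (k:ℝ)) (n:ℝ) with h2 | h2
    · linarith [mul_nonneg hk0 (by linarith : (0:ℝ) ≤ (μA - μB) - rA - rB)]
    · linarith [mul_nonneg (by linarith : (0:ℝ) ≤ 2*(k:ℝ) - (n:ℝ))
        (by linarith : (0:ℝ) ≤ (μA - μB) + rA + rB),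
        mul_nonneg (le_of_lt hn0) (by linarith : (0:ℝ) ≤ (μA - μB) - rA - rB), ej1, ej2, ej3, ej4]
  · rw [max_eq_right h]
    rcases le_total (2 * (k:ℝ)) (n:ℝ) with h2 | h2
    · linarith [mul_nonneg (by linarith : (0:ℝ) ≤ (n:ℝ) - 2*(k:ℝ))
        (by linarith : (0:ℝ) ≤ rA + rB - (μA - μB))]
    · linarith [mul_nonneg (by linarith : (0:ℝ) ≤ 2*(k:ℝ) - (n:ℝ))
        (by linarith : (0:ℝ) ≤ (μA - μB) + rA + rB), ej1, ej2, ej3, ej4]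
end
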